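/- arXiv:2502.06545 — 5 statements merged into one kernel-verified Lean document; each statement's English description precedes it below -/
import Mathlib

section
/- Let z ∈ ℂ with |z| ≤ 1 and |arg(z)| ≤ 1/(64 n²) for an integer n ≥ 1. Then |Im(arccos(z))| ≤ 1/n. -/
/-- The principal branch of the complex inverse cosine,
`arccos z = -i log(z + i √(1 − z²))` with the principal square root. -/
noncomputable def Complex.carccos (z : ℂ) : ℂ :=
  -Complex.I * Complex.log (z + Complex.I * (1 - z ^ 2) ^ ((1 : ℂ) / 2))

set_option maxHeartbeats 4000000 in
theorem im_carccos_bound (n : ℕ) (hn : 1 ≤ n) (z : ℂ)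
    (hz : ‖z‖ ≤ 1) (harg : |Complex.arg z| ≤ 1 / (64 * n ^ 2)) :
    |(Complex.carccos z).im| ≤ 1 / n := by
  set s : ℂ := (1 - z ^ 2) ^ ((1 : ℂ)/2) with hsdef
  have hs2 : s ^ 2 = 1 - z ^ 2 := by
    have := Complex.cpow_nat_inv_pow (1 - z ^ 2) (n := 2) two_ne_zero
    norm_num at this
    simpa [hsdef] using this
  set w : ℂ := z + Complex.I * s with hwdef
  have hprod : w * (z - Complex.I * s) = 1 := by
    rw [hwdef]; linear_combination hs2 - s ^ 2 * Complex.I_sq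
  have hw0 : w ≠ 0 := left_ne_zero_of_mul_eq_one hprod
  set a : ℝ := ‖w‖ with hadef
  set b : ℝ := ‖z - Complex.I * s‖ with hbdef
  have hab : a * b = 1 := by
    rw [hadef, hbdef, ← norm_mul, hprod, norm_one]
  have ha0 : 0 < a := norm_pos_iff.mpr hw0
  have hb0 : 0 < b := by
    rcases lt_or_eq_of_le (norm_nonneg (z - Complex.I * s)) with h | h
    · exact h
    · exfalso; rw [hbdef, ← h] at hab; simp at hab
  -- imaginary part is -log a
  have him : (Complex.carccos z).im = -Real.log a := by
    rw [Complex.carccos, ← hsdef, ← hwdef]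
    simp [Complex.log_re, hadef]
  -- parallelogram
  have hpar : a ^ 2 + b ^ 2 = 2 * ‖z‖ ^ 2 + 2 * ‖s‖ ^ 2 := by
    rw [hadef, hbdef, hwdef]
    have key : ∀ u v : ℂ, ‖u + v‖ ^ 2 + ‖u - v‖ ^ 2
        = 2 * ‖u‖ ^ 2 + 2 * ‖v‖ ^ 2 := by
      intro u v
      simp only [Complex.sq_norm, Complex.normSq_apply, Complex.add_re, Complex.add_im,
        Complex.sub_re, Complex.sub_im]
      ring
    simpa [map_mul] using key z (Complex.I * s)
  have habs_s : ‖s‖ ^ 2 = ‖1 - z ^ 2‖ := by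
    rw [← norm_pow, hs2]
  set r : ℝ := ‖z‖ with hrdef
  set θ : ℝ := Complex.arg z with hθdef
  set u : ℝ := 1 / (n : ℝ) with hudef
  have hn1 : (1 : ℝ) ≤ (n : ℝ) := by exact_mod_cast hn
  have hn0 : (n : ℝ) ≠ 0 := by positivity
  have hu0 : 0 < u := by rw [hudef]; positivity
  have hu1 : u ≤ 1 := by rw [hudef]; rw [div_le_one (by positivity)]; exact hn1
  set ε : ℝ := 1 / (64 * (n : ℝ) ^ 2) with hεdef
  have hεu : ε = u ^ 2 / 64 := by rw [hεdef, hudef]; field_simp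
  have hεpos : 0 < ε := by rw [hεdef]; positivity
  have hθε : |θ| ≤ ε := harg
  have hr0 : 0 ≤ r := norm_nonneg z
  have hcosθ : z.re = r * Real.cos θ := (Complex.norm_mul_cos_arg z).symm
  have hsinθ : z.im = r * Real.sin θ := (Complex.norm_mul_sin_arg z).symm
  clear_value s w a b r θ u ε
  -- bound |1 - z^2|
  have hkey : ‖1 - z ^ 2‖ ≤ 1 - r ^ 2 + 2 * ε := by
    have hsq : ‖1 - z ^ 2‖ ^ 2
        = 1 - 2 * r ^ 2 * Real.cos (2 * θ) + r ^ 4 := by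
      rw [Complex.sq_norm, Complex.normSq_apply]
      simp only [Complex.sub_re, Complex.sub_im, Complex.one_re, Complex.one_im,
        pow_two, Complex.mul_re, Complex.mul_im, hcosθ, hsinθ, Real.cos_two_mul]
      linear_combination (2 * r ^ 2 + r ^ 4 * (Real.cos θ ^ 2 + Real.sin θ ^ 2 + 1)) *
        (Real.sin_sq_add_cos_sq θ)
    have hcos2 : 1 - (2 * θ) ^ 2 / 2 ≤ Real.cos (2 * θ) := Real.one_sub_sq_div_two_le_cos
    have hθ2 : θ ^ 2 ≤ ε ^ 2 := by
      have h1 := abs_le.1 hθε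
      nlinarith [h1.1, h1.2]
    have hB0 : 0 ≤ 1 - r ^ 2 + 2 * ε := by nlinarith [hr0, hz, hεpos]
    have hT0 : 0 ≤ ‖1 - z ^ 2‖ := norm_nonneg _
    have hc2 : 1 - 2 * θ ^ 2 ≤ Real.cos (2 * θ) := by nlinarith [hcos2]
    have hr2cos : 2 * r ^ 2 * (1 - 2 * θ ^ 2) ≤ 2 * r ^ 2 * Real.cos (2 * θ) :=
      mul_le_mul_of_nonneg_left hc2 (by positivity)
    have hrθ : r ^ 2 * θ ^ 2 ≤ ε ^ 2 := by
      have h1 : r ^ 2 * θ ^ 2 ≤ 1 * θ ^ 2 :=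
        mul_le_mul_of_nonneg_right (by nlinarith [hr0, hz]) (sq_nonneg θ)
      nlinarith [hθ2]
    have hT2 : ‖1 - z ^ 2‖ ^ 2 ≤ (1 - r ^ 2 + 2 * ε) ^ 2 := by
      rw [hsq]
      have hεr : 0 ≤ ε * (1 - r ^ 2) := mul_nonneg hεpos.le (by nlinarith [hr0, hz])
      nlinarith [hr2cos, hrθ, hεr]
    calc ‖1 - z ^ 2‖ = Real.sqrt (‖1 - z ^ 2‖ ^ 2) :=
          (Real.sqrt_sq hT0).symm
      _ ≤ Real.sqrt ((1 - r ^ 2 + 2 * ε) ^ 2) := Real.sqrt_le_sqrt hT2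
      _ = 1 - r ^ 2 + 2 * ε := Real.sqrt_sq hB0
  have hsum : a ^ 2 + b ^ 2 ≤ 2 + u ^ 2 / 16 := by
    rw [hpar, habs_s]
    linarith [hkey, hεu]
  -- bound a and b
  have hdiff : a - b ≤ u / 4 := by nlinarith [hsum, hab, hu0]
  have hdiff' : b - a ≤ u / 4 := by nlinarith [hsum, hab, hu0]
  have hau : a ≤ 1 + u / 4 := by nlinarith [hab, ha0, hb0, hdiff, hu0]
  have hbu : b ≤ 1 + u / 4 := by nlinarith [hab, ha0, hb0, hdiff', hu0]
  -- logs
  have hla : Real.log a ≤ u := by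
    have := Real.log_le_sub_one_of_pos ha0
    linarith
  have hlb : Real.log b ≤ u := by
    have := Real.log_le_sub_one_of_pos hb0
    linarith
  have hlab : Real.log a + Real.log b = 0 := by
    have := Real.log_mul ha0.ne' hb0.ne'
    rw [hab, Real.log_one] at this
    linarith
  rw [him, abs_neg, abs_le]
  constructor <;> [linarith; linarith]
end

section
/- Let M_n be the n-th monic Chebyshev polynomial and z ∈ ℂ with |z| ≤ 1 and |arg(z)| ≤ 1/(64 n²). Then |M_n(z)| ≤ 2^{2−n}. -/
open Complex

/-- The `n`-th monic Chebyshev polynomial extended to the complex plane,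
`M_n(z) = cos(n · arccos z) / 2^(n-1)`. -/
noncomputable def monicChebyshev (n : ℕ) (z : ℂ) : ℂ :=
  Complex.cos (n * Complex.carccos z) / 2 ^ (n - 1)

lemma sq_half_cpow (u : ℂ) : (u ^ ((1:ℂ)/2)) ^ 2 = u := by
  by_cases h : u = 0
  · simp [h, Complex.zero_cpow (by norm_num : (1:ℂ)/2 ≠ 0)]
  · rw [sq, ← Complex.cpow_add _ _ h]
    norm_num

lemma cos_carccos (z : ℂ) : Complex.cos (Complex.carccos z) = z := by
  set s : ℂ := (1 - z ^ 2) ^ ((1:ℂ)/2) with hs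
  have hs2 : s ^ 2 = 1 - z ^ 2 := sq_half_cpow _
  have hw : (z + I * s) * (z - I * s) = 1 := by
    have : (z + I * s) * (z - I * s) = z ^ 2 - I ^ 2 * s ^ 2 := by ring
    rw [this, I_sq, hs2]; ring
  have hw0 : z + I * s ≠ 0 := by
    intro h; rw [h, zero_mul] at hw; exact one_ne_zero hw.symm
  have hinv : (z + I * s)⁻¹ = z - I * s := inv_eq_of_mul_eq_one_right hw
  rw [Complex.carccos, Complex.cos]
  have h1 : -I * Complex.log (z + I * s) * I = Complex.log (z + I * s) := by
    rw [mul_right_comm, neg_mul, I_mul_I, neg_neg, one_mul]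
  have h2 : -(-I * Complex.log (z + I * s)) * I = -Complex.log (z + I * s) := by
    rw [neg_mul, h1]
  rw [h1, h2, Complex.exp_log hw0, Complex.exp_neg, Complex.exp_log hw0, hinv]
  ring

lemma cos_re' (w : ℂ) : (Complex.cos w).re = Real.cos w.re * Real.cosh w.im := by
  rw [Complex.cos_eq]
  simp [Complex.cos_ofReal_re, Complex.cos_ofReal_im, Complex.sin_ofReal_re, Complex.sin_ofReal_im,
    Complex.cosh_ofReal_re, Complex.cosh_ofReal_im, Complex.sinh_ofReal_re, Complex.sinh_ofReal_im]

lemma cos_im' (w : ℂ) : (Complex.cos w).im = -(Real.sin w.re * Real.sinh w.im) := by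
  rw [Complex.cos_eq]
  simp [Complex.cos_ofReal_re, Complex.cos_ofReal_im, Complex.sin_ofReal_re, Complex.sin_ofReal_im,
    Complex.cosh_ofReal_re, Complex.cosh_ofReal_im, Complex.sinh_ofReal_re, Complex.sinh_ofReal_im]

lemma abs_cos_le_cosh (w : ℂ) : ‖Complex.cos w‖ ≤ Real.cosh w.im := by
  have h2 : ‖Complex.cos w‖ ^ 2 ≤ Real.cosh w.im ^ 2 := by
    rw [Complex.sq_norm, Complex.normSq_apply, cos_re', cos_im']
    nlinarith [Real.sin_sq_add_cos_sq w.re, Real.cosh_sq_sub_sinh_sq w.im,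
      sq_nonneg (Real.sin w.re * Real.cosh w.im), sq_nonneg (Real.sin w.re * Real.sinh w.im)]
  nlinarith [norm_nonneg (Complex.cos w), Real.cosh_pos w.im]

lemma cosh_one_le_two : Real.cosh 1 ≤ 2 := by
  rw [Real.cosh_eq]
  nlinarith [Real.exp_one_lt_d9, Real.exp_lt_one_iff.mpr (by norm_num : (-1:ℝ) < 0),
    Real.exp_pos (-1:ℝ)]

theorem abs_monic_chebyshev_complex_bound (n : ℕ) (hn : 1 ≤ n) (z : ℂ)
    (hz : ‖z‖ ≤ 1) (harg : |Complex.arg z| ≤ 1 / (64 * n ^ 2)) :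
    ‖monicChebyshev n z‖ ≤ (2 : ℝ) ^ ((2 : ℤ) - n) := by
  have hn1 : (1:ℝ) ≤ (n:ℝ) := by exact_mod_cast hn
  have hnpos : (0:ℝ) < (n:ℝ) := by linarith
  set ζ := Complex.carccos z with hζ
  set a := ζ.re
  set b := ζ.im
  have hcz : Complex.cos ζ = z := cos_carccos z
  have hre : z.re = Real.cos a * Real.cosh b := by rw [← hcz, cos_re']
  have him : z.im = -(Real.sin a * Real.sinh b) := by rw [← hcz, cos_im']
  have hsinh_le : Real.sinh b ^ 2 ≤ Real.sin a ^ 2 := by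
    have h1 : ‖z‖ ^ 2 ≤ 1 := by nlinarith [norm_nonneg z]
    rw [Complex.sq_norm, Complex.normSq_apply, hre, him] at h1
    nlinarith [Real.sin_sq_add_cos_sq a, Real.cosh_sq_sub_sinh_sq b, Real.cosh_sq b]
  have himle : |z.im| ≤ |Complex.arg z| := by
    have h1 : z.im = ‖z‖ * Real.sin (Complex.arg z) :=
      (Complex.norm_mul_sin_arg z).symm
    rw [h1, abs_mul]
    calc |‖z‖| * |Real.sin (Complex.arg z)| ≤ 1 * |Real.sin (Complex.arg z)| := by
          apply mul_le_mul_of_nonneg_right _ (abs_nonneg _)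
          rwa [_root_.abs_of_nonneg (norm_nonneg z)]
      _ ≤ |Complex.arg z| := by rw [one_mul]; exact Real.abs_sin_le_abs
  have habsinh : |Real.sinh b| ≤ |Real.sin a| := by
    nlinarith [abs_nonneg (Real.sinh b), abs_nonneg (Real.sin a), _root_.sq_abs (Real.sinh b),
      _root_.sq_abs (Real.sin a)]
  have hsinh2 : Real.sinh b ^ 2 ≤ 1 / (64 * (n:ℝ) ^ 2) := by
    have h1 : Real.sinh b ^ 2 ≤ |z.im| := by
      rw [him, abs_neg, abs_mul, ← _root_.sq_abs (Real.sinh b), sq]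
      gcongr
    have h2 := h1.trans (himle.trans harg)
    rwa [show ((64:ℝ) * (n:ℝ)^2) = ((64:ℝ) * (n:ℕ)^2 : ℝ) by norm_cast] at h2 ⊢
  have hb8 : |b| ≤ 1 / (8 * (n:ℝ)) := by
    have hc : (0:ℝ) ≤ 1 / (8 * (n:ℝ)) := by positivity
    have hsabs : |Real.sinh b| ≤ 1 / (8 * (n:ℝ)) := by
      calc |Real.sinh b| = Real.sqrt (Real.sinh b ^ 2) := (Real.sqrt_sq_eq_abs _).symm
        _ ≤ Real.sqrt (1 / (64 * (n:ℝ) ^ 2)) := Real.sqrt_le_sqrt hsinh2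
        _ = 1 / (8 * (n:ℝ)) := by
            rw [show (1:ℝ) / (64 * (n:ℝ) ^ 2) = (1 / (8 * (n:ℝ))) ^ 2 by field_simp; ring,
              Real.sqrt_sq hc]
    have hb : |b| ≤ |Real.sinh b| := by
      rw [Real.abs_sinh]
      exact Real.self_le_sinh_iff.mpr (abs_nonneg b)
    linarith
  have hIm : |((n:ℂ) * ζ).im| ≤ 1 := by
    have h1 : ((n:ℂ) * ζ).im = (n:ℝ) * b := by simp [Complex.mul_im]; exact Or.inl rfl
    rw [h1, abs_mul, _root_.abs_of_nonneg hnpos.le]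
    calc (n:ℝ) * |b| ≤ (n:ℝ) * (1 / (8 * (n:ℝ))) := by gcongr
      _ ≤ 1 := by
          rw [mul_one_div, div_le_one (by positivity)]
          linarith
  have hcos2 : ‖Complex.cos ((n:ℂ) * ζ)‖ ≤ 2 := by
    refine (abs_cos_le_cosh _).trans ?_
    refine (Real.cosh_le_cosh.mpr ?_).trans cosh_one_le_two
    simpa using hIm
  obtain ⟨m, rfl⟩ : ∃ m, n = m + 1 := ⟨n - 1, (Nat.succ_pred_eq_of_pos hn).symm⟩
  rw [monicChebyshev, norm_div, norm_pow, Complex.norm_two]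
  rw [show ((2:ℤ) - ((m + 1 : ℕ) : ℤ)) = 1 - (m : ℤ) by push_cast; ring,
    zpow_sub₀ (by norm_num : (2:ℝ) ≠ 0), zpow_one, zpow_natCast]
  have hm : m + 1 - 1 = m := by omega
  rw [hm]
  gcongr
end

section
/- The coefficients c_0, …, c_n of the n-th monic Chebyshev polynomial M_n satisfy max_{0 ≤ k ≤ n} |c_k| ≤ 2^{0.3 n}. -/
open Polynomial Polynomial.Chebyshev

noncomputable def chebT_bd : ℕ → ℝ
  | 0 => 1
  | 1 => 1
  | (n + 2) => 2 * chebT_bd (n + 1) + chebT_bd n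

lemma coeff_T_le : ∀ n : ℕ, ∀ k : ℕ, |(T ℝ n).coeff k| ≤ chebT_bd n
  | 0 => by
    intro k
    simp only [Nat.cast_zero, T_zero, coeff_one, chebT_bd]
    split <;> simp
  | 1 => by
    intro k
    simp only [Nat.cast_one, T_one, coeff_X, chebT_bd]
    split <;> simp
  | (n + 2) => by
    intro k
    have h1 := coeff_T_le (n + 1)
    have h0 := coeff_T_le n
    have hc : ((n + 2 : ℕ) : ℤ) = (n : ℤ) + 2 := by push_cast; ring
    rw [hc, T_add_two, mul_assoc]
    rw [coeff_sub]
    have hx : |(2 * (X * T ℝ (n + 1))).coeff k| ≤ 2 * chebT_bd (n + 1) := by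
      rw [two_mul, coeff_add]
      cases k with
      | zero =>
        simp only [coeff_X_mul_zero]
        have := h1 0
        have habs : (0:ℝ) ≤ chebT_bd (n + 1) := le_trans (abs_nonneg _) (h1 0)
        simp
        linarith
      | succ m =>
        rw [coeff_X_mul]
        have := h1 m
        push_cast at this
        calc |(T ℝ ((n:ℤ) + 1)).coeff m + (T ℝ ((n:ℤ) + 1)).coeff m|
            ≤ |(T ℝ ((n:ℤ) + 1)).coeff m| + |(T ℝ ((n:ℤ) + 1)).coeff m| := abs_add_le _ _
          _ ≤ 2 * chebT_bd (n + 1) := by linarith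
    have hy := h0 k
    calc |(2 * (X * T ℝ ((n:ℤ) + 1))).coeff k - (T ℝ n).coeff k|
        ≤ |(2 * (X * T ℝ ((n:ℤ) + 1))).coeff k| + |(T ℝ n).coeff k| := abs_sub _ _
      _ ≤ 2 * chebT_bd (n + 1) + chebT_bd n := by
          push_cast at hx ⊢
          linarith
      _ = chebT_bd (n + 2) := rfl

lemma rpow_03_ge : (1.225 : ℝ) ≤ (2 : ℝ) ^ ((0.3 : ℝ)) := by
  have h2 : (0:ℝ) ≤ (2:ℝ) ^ ((0.3:ℝ)) := Real.rpow_nonneg (by norm_num) _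
  have hpow : ((2:ℝ) ^ ((0.3:ℝ))) ^ (10 : ℕ) = 8 := by
    rw [← Real.rpow_natCast ((2:ℝ) ^ ((0.3:ℝ))) 10, ← Real.rpow_mul (by norm_num)]
    norm_num
  have h10 : (1.225 : ℝ) ^ (10 : ℕ) ≤ ((2:ℝ) ^ ((0.3:ℝ))) ^ (10 : ℕ) := by
    rw [hpow]; norm_num
  exact le_of_pow_le_pow_left₀ (by norm_num) h2 h10

lemma chebT_bd_le : ∀ n : ℕ, chebT_bd (n + 1) ≤ (2 : ℝ) ^ ((0.3 : ℝ) * ((n : ℝ) + 1)) * 2 ^ n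
  | 0 => by
    have := rpow_03_ge
    simp only [chebT_bd, Nat.cast_zero, zero_add, mul_one, pow_zero]
    linarith
  | 1 => by
    have h := rpow_03_ge
    have h0 : (0:ℝ) ≤ (2:ℝ) ^ ((0.3:ℝ)) := Real.rpow_nonneg (by norm_num) _
    have he : (2:ℝ) ^ ((0.3:ℝ) * ((1:ℝ) + 1)) = ((2:ℝ) ^ ((0.3:ℝ)))^(2:ℕ) := by
      rw [← Real.rpow_natCast ((2:ℝ) ^ ((0.3:ℝ))) 2, ← Real.rpow_mul (by norm_num)]
      norm_num
    have h3 : chebT_bd 2 = 3 := by norm_num [chebT_bd]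
    push_cast
    rw [he]
    show chebT_bd 2 ≤ _
    rw [h3]
    nlinarith
  | (n + 2) => by
    have h1 := chebT_bd_le (n + 1)
    have h0 := chebT_bd_le n
    have hr := rpow_03_ge
    have hA : (0:ℝ) < (2:ℝ) ^ ((0.3:ℝ) * ((n:ℝ) + 1)) := Real.rpow_pos_of_pos (by norm_num) _
    have hp : (0:ℝ) < (2:ℝ)^n := by positivity
    set r : ℝ := (2:ℝ) ^ ((0.3:ℝ)) with hrdef
    set A : ℝ := (2:ℝ) ^ ((0.3:ℝ) * ((n:ℝ) + 1)) with hAdef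
    have e1 : (2:ℝ) ^ ((0.3:ℝ) * (((n + 1 : ℕ) : ℝ) + 1)) = A * r := by
      rw [hAdef, hrdef, ← Real.rpow_add (by norm_num)]
      congr 1
      push_cast; ring
    have e2 : (2:ℝ) ^ ((0.3:ℝ) * (((n + 2 : ℕ) : ℝ) + 1)) = A * r * r := by
      rw [hAdef, hrdef, ← Real.rpow_add (by norm_num), ← Real.rpow_add (by norm_num)]
      congr 1
      push_cast; ring
    rw [e1] at h1
    show chebT_bd (n + 3) ≤ _
    rw [e2]
    have step : chebT_bd (n + 3) = 2 * chebT_bd (n + 2) + chebT_bd (n + 1) := rfl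
    rw [step]
    have key : 4 * r + 1 ≤ 4 * (r * r) := by nlinarith
    calc 2 * chebT_bd (n + 2) + chebT_bd (n + 1)
        ≤ 2 * (A * r * 2 ^ (n + 1)) + A * 2 ^ n := by nlinarith
      _ = A * 2 ^ n * (4 * r + 1) := by ring
      _ ≤ A * 2 ^ n * (4 * (r * r)) := by
          apply mul_le_mul_of_nonneg_left key (by positivity)
      _ = A * r * r * 2 ^ (n + 2) := by ring

theorem monic_chebyshev_coeffs_bound (n : ℕ) (hn : 1 ≤ n) (k : ℕ) (hk : k ≤ n) :
    |(Polynomial.Chebyshev.T ℝ n).coeff k / 2 ^ (n - 1)|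
      ≤ (2 : ℝ) ^ ((0.3 : ℝ) * n) := by
  obtain ⟨m, rfl⟩ := Nat.exists_eq_add_of_le hn
  have h1 := coeff_T_le (1 + m) k
  have h2 := chebT_bd_le m
  have hm : 1 + m - 1 = m := by omega
  have hmm : 1 + m = m + 1 := by omega
  rw [hm, abs_div, abs_pow, abs_two]
  rw [div_le_iff₀ (by positivity)]
  rw [hmm] at h1 ⊢
  have hcast : ((0.3 : ℝ) * ((m + 1 : ℕ) : ℝ)) = (0.3 : ℝ) * ((m : ℝ) + 1) := by
    push_cast; ring
  rw [hcast]
  calc |(T ℝ ((m + 1 : ℕ) : ℤ)).coeff k| ≤ chebT_bd (m + 1) := h1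
    _ ≤ (2 : ℝ) ^ ((0.3 : ℝ) * ((m : ℝ) + 1)) * 2 ^ m := h2
end

section
/- For all c ∈ (0, 1], the function f(c) = ((1−c)·e/(4c))^c satisfies f(c) ≤ 2^{0.3}. -/
theorem scalar_exp_inequality (c : ℝ) (hc0 : 0 < c) (hc1 : c ≤ 1) :
    ((1 - c) * Real.exp 1 / (4 * c)) ^ c ≤ (2 : ℝ) ^ (0.3 : ℝ) := by
  rcases eq_or_lt_of_le hc1 with h1 | h1
  · subst h1
    have : ((1 - (1:ℝ)) * Real.exp 1 / (4 * 1)) = 0 := by norm_num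
    rw [this, Real.rpow_one] at *
    positivity
  · have ha : 0 < (1 - c) / (4 * c) := div_pos (by linarith) (by linarith)
    set a := (1 - c) / (4 * c) with hadef
    have hb : (1 - c) * Real.exp 1 / (4 * c) = Real.exp 1 * a := by
      rw [hadef]; field_simp
    have hbpos : 0 < Real.exp 1 * a := by positivity
    rw [hb, Real.rpow_def_of_pos hbpos, Real.rpow_def_of_pos (by norm_num : (0:ℝ) < 2)]
    rw [Real.exp_le_exp]
    have h03 : (0.3 : ℝ) = 3/10 := by norm_num
    rw [h03]
    -- log (e * a) = 1 + log a
    have hlog : Real.log (Real.exp 1 * a) = 1 + Real.log a := by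
      rw [Real.log_mul (Real.exp_ne_zero 1) (ne_of_gt ha), Real.log_exp]
    rw [hlog]
    -- log a ≤ a / (61/50) + log (61/50) - 1
    have hx : 0 < a / (61/50) := by positivity
    have hkey : Real.log a - Real.log (61/50) ≤ a / (61/50) - 1 := by
      have := Real.log_le_sub_one_of_pos hx
      rwa [Real.log_div (ne_of_gt ha) (by norm_num)] at this
    -- log (61/50) ≤ 3/10 * log 2
    have hA : Real.log (61/50) ≤ 3/10 * Real.log 2 := by
      have h10 : (((61:ℝ)/50)^(10:ℕ)) ≤ ((2:ℝ)^(3:ℕ)) := by norm_num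
      have hl := Real.log_le_log (by positivity) h10
      rw [Real.log_pow, Real.log_pow] at hl
      push_cast at hl
      linarith
    -- 25/122 ≤ 3/10 * log 2
    have hB : (25:ℝ)/122 ≤ 3/10 * Real.log 2 := by
      have h := Real.log_two_gt_d9
      norm_num at h ⊢
      linarith
    have hca' : c * (a / (61/50)) = (1 - c) * (25/122) := by
      rw [hadef]; field_simp; ring
    have hmul : c * Real.log a ≤ c * (a / (61/50) + Real.log (61/50) - 1) := by
      nlinarith [hkey, hc0.le]
    have hmul2 : c * Real.log a ≤ (1 - c) * (25/122) + c * Real.log (61/50) - c := by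
      nlinarith [hmul, hca']
    have h3 : c * Real.log (61/50) ≤ c * (3/10 * Real.log 2) :=
      mul_le_mul_of_nonneg_left hA hc0.le
    have h4 : (1 - c) * ((25:ℝ)/122) ≤ (1 - c) * (3/10 * Real.log 2) :=
      mul_le_mul_of_nonneg_left hB (by linarith)
    nlinarith [hmul2, h3, h4]
end

section
/- Let y_t = Σ_{s=1}^{t} C A^{t−s} B u_s for matrices A, B, C and vectors u_1, …, u_T, and let c_0, …, c_n be scalars with n < t. Then Σ_{i=0}^{n} c_i y_{t−i} = Σ_{s=0}^{n−1} (Σ_{i=0}^{s} c_i C A^{s−i} B) u_{t−s} + Σ_{s=0}^{t−n−1} C p(A) A^s B u_{t−n−s}, where p(x) = Σ_{i=0}^{n} c_i x^{n−i}. -/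
private lemma sum_mulVec_aux {m k : Type*} [Fintype k] {ι : Type*} (s : Finset ι)
    (M : ι → Matrix m k ℂ) (v : k → ℂ) :
    (∑ i ∈ s, M i).mulVec v = ∑ i ∈ s, (M i).mulVec v := by
  induction s using Finset.cons_induction with
  | empty => simp
  | cons a s ha ih => simp [Finset.sum_cons, Matrix.add_mulVec, ih]

open Finset in
theorem lds_convolution_identity
    (d din dout : ℕ)
    (A : Matrix (Fin d) (Fin d) ℂ)
    (B : Matrix (Fin d) (Fin din) ℂ)
    (C : Matrix (Fin dout) (Fin d) ℂ)
    (u : ℕ → Fin din → ℂ)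
    (y : ℕ → Fin dout → ℂ)
    (hy : ∀ τ, y τ = ∑ s ∈ Finset.Icc 1 τ, (C * A ^ (τ - s) * B).mulVec (u s))
    (n t : ℕ) (hnt : n < t) (c : ℕ → ℂ) :
    ∑ i ∈ Finset.range (n + 1), c i • y (t - i)
      = (∑ s ∈ Finset.range n,
          (∑ i ∈ Finset.range (s + 1), c i • (C * A ^ (s - i) * B)).mulVec (u (t - s)))
        + ∑ s ∈ Finset.range (t - n),
            (C * (∑ i ∈ Finset.range (n + 1), c i • A ^ (n - i)) * A ^ s * B).mulVec
              (u (t - n - s)) := by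
  -- step 1: y τ = ∑ k ∈ range τ, (C A^k B) u (τ - k)
  have hy' : ∀ τ, y τ = ∑ k ∈ Finset.range τ, (C * A ^ k * B).mulVec (u (τ - k)) := by
    intro τ
    rw [hy]
    refine Finset.sum_nbij' (i := fun s => τ - s) (j := fun k => τ - k) ?_ ?_ ?_ ?_ ?_
    · intro s hs
      simp only [Finset.mem_Icc] at hs
      simp only [Finset.mem_range]
      omega
    · intro k hk
      simp only [Finset.mem_range] at hk
      simp only [Finset.mem_Icc]
      omega
    · intro s hs; simp only [Finset.mem_Icc] at hs; omega
    · intro k hk; simp only [Finset.mem_range] at hk; omega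
    · intro s hs
      simp only [Finset.mem_Icc] at hs
      have h1 : τ - (τ - s) = s := by omega
      rw [h1]
  -- step 2: LHS as double sum over (i, s) with i ≤ s < t
  have step2 : ∑ i ∈ Finset.range (n + 1), c i • y (t - i)
      = ∑ i ∈ Finset.range (n + 1), ∑ s ∈ Finset.Ico i t,
          c i • (C * A ^ (s - i) * B).mulVec (u (t - s)) := by
    refine Finset.sum_congr rfl fun i hi => ?_
    simp only [Finset.mem_range] at hi
    rw [hy', Finset.smul_sum, Finset.sum_Ico_eq_sum_range]
    refine Finset.sum_congr rfl fun k hk => ?_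
    simp only [Finset.mem_range] at hk
    rw [show i + k - i = k by omega, show t - (i + k) = t - i - k by omega]
  rw [step2]
  -- step 3: extend inner sum to range t with indicator, then swap
  have step3 : ∀ i ∈ Finset.range (n + 1),
      ∑ s ∈ Finset.Ico i t, c i • (C * A ^ (s - i) * B).mulVec (u (t - s))
      = ∑ s ∈ Finset.range t,
          if i ≤ s then c i • (C * A ^ (s - i) * B).mulVec (u (t - s)) else 0 := by
    intro i hi
    simp only [Finset.mem_range] at hi
    rw [← Finset.sum_filter]
    congr 1
    ext s
    simp only [Finset.mem_filter, Finset.mem_range, Finset.mem_Ico]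
    omega
  rw [Finset.sum_congr rfl step3, Finset.sum_comm]
  -- step 4: split range t = range n ++ shifted range (t - n)
  rw [show t = n + (t - n) by omega, Finset.sum_range_add]
  rw [show n + (t - n) - n = t - n by omega]
  congr 1
  · -- s < n part
    refine Finset.sum_congr rfl fun s hs => ?_
    simp only [Finset.mem_range] at hs
    rw [← Finset.sum_filter]
    have hf : Finset.filter (fun i => i ≤ s) (Finset.range (n + 1)) = Finset.range (s + 1) := by
      ext i
      simp only [Finset.mem_filter, Finset.mem_range]
      omega
    rw [hf, sum_mulVec_aux]
    exact Finset.sum_congr rfl fun i _ => (Matrix.smul_mulVec _ _ _).symm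
  · -- s ≥ n part
    refine Finset.sum_congr rfl fun k hk => ?_
    simp only [Finset.mem_range] at hk
    have hall : ∀ i ∈ Finset.range (n + 1),
        (if i ≤ n + k then c i • (C * A ^ (n + k - i) * B).mulVec (u (n + (t - n) - (n + k))) else 0)
        = c i • (C * A ^ (n + k - i) * B).mulVec (u (n + (t - n) - (n + k))) := by
      intro i hi
      simp only [Finset.mem_range] at hi
      rw [if_pos (by omega)]
    rw [Finset.sum_congr rfl hall]
    have hmat : C * (∑ i ∈ Finset.range (n + 1), c i • A ^ (n - i)) * A ^ k * B
        = ∑ i ∈ Finset.range (n + 1), c i • (C * A ^ (n + k - i) * B) := by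
      rw [Matrix.mul_sum, Matrix.sum_mul, Matrix.sum_mul]
      refine Finset.sum_congr rfl fun i hi => ?_
      simp only [Finset.mem_range] at hi
      have hp : A ^ (n - i) * A ^ k = A ^ (n + k - i) := by
        rw [← pow_add]; congr 1; omega
      rw [Matrix.mul_smul, Matrix.smul_mul, Matrix.smul_mul]
      congr 1
      rw [Matrix.mul_assoc C, hp]
    rw [hmat, sum_mulVec_aux]
    rw [show t - n - k = n + (t - n) - (n + k) by omega]
    exact Finset.sum_congr rfl fun i _ => by rw [Matrix.smul_mulVec]
end
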